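/- arXiv:1008.1021 — 5 statements merged into one kernel-verified Lean document; each statement's English description precedes it below -/
import Mathlib

section
/- Let X be a probability space, n a positive integer, k > 0 a real number, and let f : X^n → {0,1} be a k-pseudo-junta. Then the total influence of f satisfies I_f ≤ 2k. -/
open MeasureTheory

/-- The influence of the `j`-th variable on `f : Xⁿ → {0,1}`:
the probability that resampling the `j`-th coordinate changes the value of `f`. -/
noncomputable def influence {Ω : Type*} [MeasurableSpace Ω] (μ : Measure Ω) (n : ℕ)
    (f : (Fin n → Ω) → Bool) (j : Fin n) : ℝ :=
  (((Measure.pi fun _ : Fin n => μ).prod μ)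
    {p : (Fin n → Ω) × Ω | f p.1 ≠ f (Function.update p.1 j p.2)}).toReal

/-- The total influence `I_f = Σ_j I_f(j)`. -/
noncomputable def totalInfluence {Ω : Type*} [MeasurableSpace Ω] (μ : Measure Ω) (n : ℕ)
    (f : (Fin n → Ω) → Bool) : ℝ :=
  ∑ j : Fin n, influence μ n f j

/-- The discrete σ-algebra on finsets. -/
instance (α : Type*) : MeasurableSpace (Finset α) := ⊤

/-- The σ-algebra on `Option α` induced by `some`. -/
instance (α : Type*) [m : MeasurableSpace α] : MeasurableSpace (Option α) := m.map some

/-- `J_𝒥(x) = ⋃ {S ⊆ [n] : J_S(x_S) = 1}`. -/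
noncomputable def juntaUnion {Ω : Type*} {n : ℕ} (J : Finset (Fin n) → ((Fin n → Ω) → Bool))
    (x : Fin n → Ω) : Finset (Fin n) :=
  Finset.univ.sup fun S : Finset (Fin n) => if J S x = true then S else ∅

/-- `𝔉_𝒥`: the coarsest σ-algebra making `x ↦ (J_𝒥(x), x_{J_𝒥(x)})` measurable. -/
noncomputable def juntaSigma {Ω : Type*} [MeasurableSpace Ω] {n : ℕ}
    (J : Finset (Fin n) → ((Fin n → Ω) → Bool)) : MeasurableSpace (Fin n → Ω) :=
  MeasurableSpace.comap
    (fun x => (juntaUnion J x,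
      fun i => if i ∈ juntaUnion J x then some (x i) else (none : Option Ω)))
    inferInstance

/-- `f` is a `k`-pseudo-junta: `f` is measurable with respect to `𝔉_𝒥` for some collection
`𝒥 = {J_S}` of measurable functions `J_S : X^S → {0,1}` with `∫ |J_𝒥(x)| dx ≤ k`. -/
def IsPseudoJunta {Ω : Type*} [MeasurableSpace Ω] (μ : Measure Ω) (n : ℕ)
    (f : (Fin n → Ω) → Bool) (k : ℝ) : Prop :=
  ∃ J : Finset (Fin n) → ((Fin n → Ω) → Bool),
    (∀ S, Measurable (J S)) ∧
    (∀ S : Finset (Fin n), ∀ x y : Fin n → Ω, (∀ i ∈ S, x i = y i) → J S x = J S y) ∧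
    Measurable[juntaSigma J] f ∧
    ∫ x, ((juntaUnion J x).card : ℝ) ∂(Measure.pi fun _ : Fin n => μ) ≤ k

/-!
Resampling coordinate `j` can change `f` only if `j` lies in the junta set of the point before or
after resampling: otherwise the junta set and the coordinates it exposes are unchanged, and `f` is
determined by them. Both points are distributed according to the product measure, so
`I_f(j) ≤ 2 Pr[j ∈ J_𝒥(x)]`, and summing over `j` gives `I_f ≤ 2 E|J_𝒥(x)| ≤ 2k`.
-/

theorem Measurable.apply_eq_of_comap_apply_eq {α β γ : Type*} [MeasurableSpace β]
    [MeasurableSpace γ] [MeasurableSingletonClass γ] {g : α → β} {f : α → γ}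
    (hf : Measurable[MeasurableSpace.comap g inferInstance] f) {x y : α} (h : g x = g y) :
    f x = f y := by
  obtain ⟨A, -, hA⟩ := hf (measurableSet_singleton (f x))
  have hx : x ∈ g ⁻¹' A := hA ▸ rfl
  rw [Set.mem_preimage, h, ← Set.mem_preimage, hA] at hx
  exact hx.symm

theorem MeasureTheory.measurePreserving_update {ι : Type*} [Fintype ι] [DecidableEq ι]
    {α : ι → Type*} [∀ i, MeasurableSpace (α i)] (μ : ∀ i, Measure (α i))
    [∀ i, SigmaFinite (μ i)] (j : ι) [IsProbabilityMeasure (μ j)] :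
    MeasurePreserving (fun p : (∀ i, α i) × α j => Function.update p.1 j p.2)
      ((Measure.pi μ).prod (μ j)) (Measure.pi μ) where
  measurable := measurable_update'
  map_eq := by
    refine (Measure.pi_eq fun s hs => ?_).symm
    have hpre : (fun p : (∀ i, α i) × α j => Function.update p.1 j p.2) ⁻¹' Set.univ.pi s
        = Set.univ.pi (Function.update s j Set.univ) ×ˢ s j := by
      ext ⟨x, y⟩
      simp only [Set.mem_preimage, Set.mem_univ_pi, Set.mem_prod,
        Function.forall_update_iff x fun i t => t ∈ s i,
        Function.forall_update_iff s fun i t => x i ∈ t, Set.mem_univ, true_and, and_comm]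
    have hprod : ∏ i, μ i (Function.update s j Set.univ i)
        = ∏ i, Function.update (fun i => μ i (s i)) j 1 i := by
      congr with i
      rw [Function.apply_update (fun i t => μ i t), measure_univ]
    rw [Measure.map_apply measurable_update' (.univ_pi hs), hpre, Measure.prod_prod,
      Measure.pi_pi, hprod, Finset.prod_update_of_mem (Finset.mem_univ j), one_mul,
      ← Finset.prod_singleton (fun i => μ i (s i)) j, Finset.prod_sdiff (Finset.subset_univ _)]

theorem MeasureTheory.integral_card_eq_sum_measureReal {X ι : Type*} [MeasurableSpace X]
    [Fintype ι] (μ : Measure X) [IsFiniteMeasure μ] (F : X → Finset ι)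
    (hF : ∀ i, MeasurableSet {x | i ∈ F x}) :
    ∫ x, ((F x).card : ℝ) ∂μ = ∑ i, μ.real {x | i ∈ F x} := by
  simp_rw [← integral_indicator_one (hF _)]
  rw [← integral_finsetSum _ fun i _ => (integrable_const 1).indicator (hF i)]
  congr with x
  simp [Set.indicator]

section Junta

variable {Ω : Type*} {n : ℕ} (J : Finset (Fin n) → ((Fin n → Ω) → Bool))

theorem mem_juntaUnion {x : Fin n → Ω} {j : Fin n} :
    j ∈ juntaUnion J x ↔ ∃ S, J S x = true ∧ j ∈ S := by
  simp only [juntaUnion, Finset.mem_sup, Finset.mem_univ, true_and]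
  exact exists_congr fun S => by split_ifs with h <;> simp [h]

theorem measurableSet_setOf_mem_juntaUnion [MeasurableSpace Ω] (hJ : ∀ S, Measurable (J S))
    (j : Fin n) : MeasurableSet {x | j ∈ juntaUnion J x} := by
  simp_rw [mem_juntaUnion, Set.ofPred_exists]
  exact .iUnion fun S => ((hJ S) (measurableSet_singleton true)).inter (.const _)

variable {J}

theorem juntaUnion_update_of_notMem
    (hJ : ∀ S : Finset (Fin n), ∀ x y : Fin n → Ω, (∀ i ∈ S, x i = y i) → J S x = J S y)
    {x : Fin n → Ω} {j : Fin n} {y : Ω} (hx : j ∉ juntaUnion J x)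
    (hy : j ∉ juntaUnion J (Function.update x j y)) :
    juntaUnion J (Function.update x j y) = juntaUnion J x := by
  refine Finset.sup_congr rfl fun S _ => ?_
  by_cases hjS : j ∈ S
  · have hxS : J S x ≠ true := fun h => hx ((mem_juntaUnion J).2 ⟨S, h, hjS⟩)
    have hyS : J S (Function.update x j y) ≠ true := fun h =>
      hy ((mem_juntaUnion J).2 ⟨S, h, hjS⟩)
    simp [hxS, hyS]
  · rw [hJ S _ x fun i hi => Function.update_of_ne (ne_of_mem_of_not_mem hi hjS) _ _]

theorem apply_update_eq_of_notMem_juntaUnion [MeasurableSpace Ω]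
    (hJ : ∀ S : Finset (Fin n), ∀ x y : Fin n → Ω, (∀ i ∈ S, x i = y i) → J S x = J S y)
    {f : (Fin n → Ω) → Bool} (hf : Measurable[juntaSigma J] f)
    {x : Fin n → Ω} {j : Fin n} {y : Ω} (hx : j ∉ juntaUnion J x)
    (hy : j ∉ juntaUnion J (Function.update x j y)) :
    f (Function.update x j y) = f x := by
  refine hf.apply_eq_of_comap_apply_eq ?_
  rw [juntaUnion_update_of_notMem hJ hx hy]
  congr with i
  split_ifs with hi
  · rw [Function.update_of_ne (ne_of_mem_of_not_mem hi hx)]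
  · rfl

end Junta

theorem influence_le_two_mul_measureReal {Ω : Type*} [MeasurableSpace Ω] (μ : Measure Ω)
    [IsProbabilityMeasure μ] {n : ℕ} {f : (Fin n → Ω) → Bool} {j : Fin n}
    {S : Set (Fin n → Ω)} (hS : MeasurableSet S)
    (hfS : ∀ x y, x ∉ S → Function.update x j y ∉ S → f (Function.update x j y) = f x) :
    influence μ n f j ≤ 2 * (Measure.pi fun _ : Fin n => μ).real S := by
  set ν := (Measure.pi fun _ : Fin n => μ).prod μ
  have hsub : {p : (Fin n → Ω) × Ω | f p.1 ≠ f (Function.update p.1 j p.2)}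
      ⊆ Prod.fst ⁻¹' S ∪ (fun p => Function.update p.1 j p.2) ⁻¹' S := by
    rintro ⟨x, y⟩ hne
    by_contra h
    rw [Set.mem_union, not_or] at h
    exact hne (hfS x y h.1 h.2).symm
  calc influence μ n f j
      ≤ ν.real (Prod.fst ⁻¹' S) + ν.real ((fun p => Function.update p.1 j p.2) ⁻¹' S) :=
        (measureReal_mono hsub).trans (measureReal_union_le _ _)
    _ = 2 * (Measure.pi fun _ : Fin n => μ).real S := by
        rw [measurePreserving_fst.measureReal_preimage hS.nullMeasurableSet,
          (measurePreserving_update (fun _ => μ) j).measureReal_preimage hS.nullMeasurableSet,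
          two_mul]

theorem pseudoJunta_totalInfluence_le_general {Ω : Type*} [MeasurableSpace Ω] (μ : Measure Ω)
    [IsProbabilityMeasure μ] (n : ℕ) (k : ℝ)
    (f : (Fin n → Ω) → Bool) (hf : IsPseudoJunta μ n f k) :
    totalInfluence μ n f ≤ 2 * k := by
  obtain ⟨J, hJmeas, hJdep, hfJ, hk⟩ := hf
  have hmem := measurableSet_setOf_mem_juntaUnion J hJmeas
  calc totalInfluence μ n f
      ≤ ∑ j, 2 * (Measure.pi fun _ : Fin n => μ).real {x | j ∈ juntaUnion J x} :=
        Finset.sum_le_sum fun j _ => influence_le_two_mul_measureReal μ (hmem j)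
          fun _ _ => apply_update_eq_of_notMem_juntaUnion hJdep hfJ
    _ = 2 * ∫ x, ((juntaUnion J x).card : ℝ) ∂(Measure.pi fun _ : Fin n => μ) := by
        rw [integral_card_eq_sum_measureReal _ _ hmem, Finset.mul_sum]
    _ ≤ 2 * k := by linarith

/-- A `k`-pseudo-junta has total influence at most `2k`. -/
theorem pseudoJunta_totalInfluence_le {Ω : Type*} [MeasurableSpace Ω] (μ : Measure Ω)
    [IsProbabilityMeasure μ] (n : ℕ) (hn : 0 < n) (k : ℝ) (hk : 0 < k)
    (f : (Fin n → Ω) → Bool) (hf : IsPseudoJunta μ n f k) :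
    totalInfluence μ n f ≤ 2 * k :=
  pseudoJunta_totalInfluence_le_general μ n k f hf
end

section
/- Let X be a probability space, n a positive integer, and f ∈ L²(X^n) with generalized Walsh expansion f = Σ_{S ⊆ [n]} F_S. Then ‖f‖_2² = Σ_{S ⊆ [n]} ‖F_S‖_2² (Parseval's identity). -/
/-!
The components `F S` are pairwise orthogonal in `L²`, so Parseval is Pythagoras for a finite
orthogonal family. If `S ≠ T`, some coordinate `i` lies in one set, say `T`, but not in `S`.
Resampling the `i`-th coordinate, `(x, t) ↦ update x i t`, preserves the product measure, so by
Fubini `∫ ⟪F S, F T⟫` may be computed by integrating over `t` first; there `F S` is constant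
while `F T` integrates to zero.
-/

open MeasureTheory

lemma DependsOn.apply_update_of_notMem {ι β : Type*} {α : ι → Type*} [DecidableEq ι]
    {f : (∀ i, α i) → β} {s : Set ι} (hf : DependsOn f s) {i : ι} (hi : i ∉ s)
    (x : ∀ i, α i) (t : α i) : f (Function.update x i t) = f x :=
  hf fun _ hj => Function.update_of_ne (ne_of_mem_of_not_mem hj hi) t x

namespace MeasureTheory

variable {𝕜 E : Type*} [RCLike 𝕜] [NormedAddCommGroup E] [InnerProductSpace 𝕜 E]

theorem integral_norm_sum_sq_of_pairwise_integral_inner_eq_zero {α ι : Type*} [Fintype ι]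
    [MeasurableSpace α] {μ : Measure α} {g : ι → α → E} (hg : ∀ i, MemLp (g i) 2 μ)
    (horth : Pairwise fun i j => ∫ x, inner 𝕜 (g i x) (g j x) ∂μ = 0) :
    ∫ x, ‖∑ i, g i x‖ ^ 2 ∂μ = ∑ i, ∫ x, ‖g i x‖ ^ 2 ∂μ := by
  have hint : ∀ i j, Integrable (fun x => inner 𝕜 (g i x) (g j x)) μ := fun i j =>
    L2.integrable_inner ((hg i).toLp) ((hg j).toLp) |>.congr <| by
      filter_upwards [(hg i).coeFn_toLp, (hg j).coeFn_toLp] with x hi hj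
      rw [hi, hj]
  apply RCLike.ofReal_injective (K := 𝕜)
  simp only [RCLike.ofReal_sum, ← integral_ofReal, RCLike.ofReal_pow, ← inner_self_eq_norm_sq_to_K,
    sum_inner, inner_sum]
  rw [integral_finsetSum _ fun j _ => integrable_finsetSum _ fun i _ => hint i j]
  refine Finset.sum_congr rfl fun j _ => ?_
  rw [integral_finsetSum _ fun i _ => hint i j, Finset.sum_eq_single j]
  · exact fun i _ hij => horth hij
  · simp

section Product

variable {ι : Type*} [Fintype ι] [DecidableEq ι] {X : ι → Type*} [∀ i, MeasurableSpace (X i)]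

theorem measurePreserving_update_s8 (μ : ∀ i, Measure (X i)) [∀ j, SigmaFinite (μ j)] (i : ι)
    [IsProbabilityMeasure (μ i)] :
    MeasurePreserving (fun p : (∀ j, X j) × X i => Function.update p.1 i p.2)
      ((Measure.pi μ).prod (μ i)) (Measure.pi μ) := by
  refine ⟨measurable_update', (Measure.pi_eq fun s hs => ?_).symm⟩
  have hpre : (fun p : (∀ j, X j) × X i => Function.update p.1 i p.2) ⁻¹' Set.univ.pi s
      = Set.univ.pi (Function.update s i Set.univ) ×ˢ s i := by
    ext ⟨x, t⟩
    simp only [Set.mem_preimage, Set.mem_univ_pi, Set.mem_prod]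
    refine ⟨fun h => ⟨fun j => ?_, by simpa using h i⟩, fun ⟨h, ht⟩ j => ?_⟩
    · rcases eq_or_ne j i with rfl | hj
      · simp
      · simpa [hj] using h j
    · rcases eq_or_ne j i with rfl | hj
      · simpa using ht
      · simpa [hj] using h j
  rw [Measure.map_apply measurable_update' (.univ_pi hs), hpre, Measure.prod_prod,
    Measure.pi_pi, ← Finset.mul_prod_erase _ _ (Finset.mem_univ i),
    ← Finset.mul_prod_erase _ (fun j => μ j (s j)) (Finset.mem_univ i)]
  rw [Function.update_self, measure_univ, one_mul, mul_comm]
  congr 1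
  exact Finset.prod_congr rfl fun j hj => by rw [Function.update_of_ne (Finset.ne_of_mem_erase hj)]

theorem integral_inner_eq_zero_of_integral_update_eq_zero [NormedSpace ℝ E] [CompleteSpace E]
    (μ : ∀ i, Measure (X i)) [∀ j, SigmaFinite (μ j)] {i : ι} [IsProbabilityMeasure (μ i)]
    {g h : (∀ j, X j) → E} (hg : Integrable g (Measure.pi μ))
    (hg_update : ∀ᵐ x ∂Measure.pi μ, ∫ t, g (Function.update x i t) ∂μ i = 0)
    (hh : ∀ x t, h (Function.update x i t) = h x) :
    ∫ x, inner 𝕜 (h x) (g x) ∂Measure.pi μ = 0 := by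
  by_cases hint : Integrable (fun x => inner 𝕜 (h x) (g x)) (Measure.pi μ)
  swap
  · exact integral_undef hint -- the junk value of a non-integrable integrand
  have hmp := measurePreserving_update_s8 μ i
  have hg_fiber : ∀ᵐ x ∂Measure.pi μ, Integrable (fun t => g (Function.update x i t)) (μ i) :=
    (hmp.integrable_comp_of_integrable hg).prod_right_ae
  calc ∫ x, inner 𝕜 (h x) (g x) ∂Measure.pi μ
      = ∫ x, inner 𝕜 (h x) (g x) ∂((Measure.pi μ).prod (μ i)).map
          fun p => Function.update p.1 i p.2 := by rw [hmp.map_eq]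
    _ = ∫ x, ∫ t, inner 𝕜 (h (Function.update x i t)) (g (Function.update x i t)) ∂μ i
          ∂Measure.pi μ := by
      rw [integral_map hmp.measurable.aemeasurable (by rw [hmp.map_eq]; exact hint.1)]
      exact integral_prod _ (hmp.integrable_comp_of_integrable hint)
    _ = 0 := by
      refine integral_eq_zero_of_ae ?_
      filter_upwards [hg_update, hg_fiber] with x hx hx_int
      simp only [hh]
      rw [integral_inner hx_int, hx, inner_zero_right, Pi.zero_apply]

theorem integral_inner_eq_zero_of_dependsOn [NormedSpace ℝ E] [CompleteSpace E]
    (μ : ∀ i, Measure (X i)) [∀ j, IsProbabilityMeasure (μ j)] {S T : Set ι}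
    {F G : (∀ j, X j) → E} (hF : Integrable F (Measure.pi μ)) (hG : Integrable G (Measure.pi μ))
    (hF_dep : DependsOn F S) (hG_dep : DependsOn G T)
    (hF_update : ∀ i ∈ S, ∀ᵐ x ∂Measure.pi μ, ∫ t, F (Function.update x i t) ∂μ i = 0)
    (hG_update : ∀ i ∈ T, ∀ᵐ x ∂Measure.pi μ, ∫ t, G (Function.update x i t) ∂μ i = 0)
    (hST : S ≠ T) :
    ∫ x, inner 𝕜 (F x) (G x) ∂Measure.pi μ = 0 := by
  obtain ⟨i, hiT, hiS⟩ | ⟨i, hiS, hiT⟩ : (∃ i ∈ T, i ∉ S) ∨ (∃ i ∈ S, i ∉ T) := by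
    by_contra! h
    exact hST (Set.Subset.antisymm h.2 h.1)
  · exact integral_inner_eq_zero_of_integral_update_eq_zero μ hG (hG_update i hiT)
      (hF_dep.apply_update_of_notMem hiS)
  · have hGF := integral_inner_eq_zero_of_integral_update_eq_zero (𝕜 := 𝕜) μ hF
      (hF_update i hiS) (hG_dep.apply_update_of_notMem hiT)
    simp_rw [← inner_conj_symm (F _), integral_conj, hGF, map_zero]

end Product

end MeasureTheory

theorem walsh_parseval_general {Ω : Type*} [MeasurableSpace Ω] (μ : Measure Ω)
    [IsProbabilityMeasure μ] (n : ℕ) (f : (Fin n → Ω) → ℂ)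
    (F : Finset (Fin n) → ((Fin n → Ω) → ℂ))
    (hF2 : ∀ S, MemLp (F S) 2 (Measure.pi fun _ : Fin n => μ))
    (hFdep : ∀ S : Finset (Fin n), ∀ x y : Fin n → Ω, (∀ i ∈ S, x i = y i) → F S x = F S y)
    (hFzero : ∀ S : Finset (Fin n), ∀ i ∈ S, ∀ᵐ x ∂(Measure.pi fun _ : Fin n => μ),
      ∫ t, F S (Function.update x i t) ∂μ = 0)
    (hsum : ∀ᵐ x ∂(Measure.pi fun _ : Fin n => μ), f x = ∑ S : Finset (Fin n), F S x) :
    ∫ x, ‖f x‖ ^ 2 ∂(Measure.pi fun _ : Fin n => μ) =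
      ∑ S : Finset (Fin n), ∫ x, ‖F S x‖ ^ 2 ∂(Measure.pi fun _ : Fin n => μ) := by
  have hF_int : ∀ S, Integrable (F S) (Measure.pi fun _ : Fin n => μ) := fun S =>
    (hF2 S).integrable one_le_two
  rw [integral_congr_ae (hsum.mono fun x hx => by rw [hx])]
  refine integral_norm_sum_sq_of_pairwise_integral_inner_eq_zero (𝕜 := ℂ) hF2 fun S T hST => ?_
  exact integral_inner_eq_zero_of_dependsOn _ (hF_int S) (hF_int T) (hFdep S) (hFdep T)
    (hFzero S) (hFzero T) (by simpa using hST)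

/-- **Parseval's identity** for the generalized Walsh expansion:
`‖f‖₂² = Σ_{S ⊆ [n]} ‖F_S‖₂²`. -/
theorem walsh_parseval {Ω : Type*} [MeasurableSpace Ω] (μ : Measure Ω)
    [IsProbabilityMeasure μ] (n : ℕ) (hn : 0 < n) (f : (Fin n → Ω) → ℂ)
    (hf : MemLp f 2 (Measure.pi fun _ : Fin n => μ))
    (F : Finset (Fin n) → ((Fin n → Ω) → ℂ))
    (hF2 : ∀ S, MemLp (F S) 2 (Measure.pi fun _ : Fin n => μ))
    (hFdep : ∀ S : Finset (Fin n), ∀ x y : Fin n → Ω, (∀ i ∈ S, x i = y i) → F S x = F S y)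
    (hFzero : ∀ S : Finset (Fin n), ∀ i ∈ S, ∀ᵐ x ∂(Measure.pi fun _ : Fin n => μ),
      ∫ t, F S (Function.update x i t) ∂μ = 0)
    (hsum : ∀ᵐ x ∂(Measure.pi fun _ : Fin n => μ), f x = ∑ S : Finset (Fin n), F S x) :
    ∫ x, ‖f x‖ ^ 2 ∂(Measure.pi fun _ : Fin n => μ) =
      ∑ S : Finset (Fin n), ∫ x, ‖F S x‖ ^ 2 ∂(Measure.pi fun _ : Fin n => μ) :=
  walsh_parseval_general μ n f F hF2 hFdep hFzero hsum
end

section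
/- (Margulis–Russo formula) Let n be a positive integer and f : {0,1}^n → {0,1} an increasing function. For every p ∈ (0,1), the map q ↦ μ_q(f) := ∫ f dμ_q^n is differentiable at p and 2 p (1 − p) · (d/dp) μ_p(f) = I_f, where I_f is the total influence of f computed with respect to the p-biased measure μ_p^n. -/
open MeasureTheory

/-- The `p`-biased Bernoulli measure on `{0,1}`: `μ_p({1}) = p`, `μ_p({0}) = 1 - p`. -/
noncomputable def bern (p : ℝ) : Measure Bool :=
  ENNReal.ofReal p • Measure.dirac true + ENNReal.ofReal (1 - p) • Measure.dirac false

/-!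
Write `μ_q(f) = ∑ₓ w_q(x) f(x)` with `w_q(x) = ∏ᵢ m_q(xᵢ)`, `m_q(1) = q` and
`m_q(0) = 1 - q`. Differentiating the product gives one term per coordinate `j`; pairing each
`x` with its flip at `j` shows that twice that term is
`∑ₓ ∏_{i ≠ j} m_p(xᵢ) · (f(x^{j←1}) - f(x^{j←0}))`, and for increasing `f` the increment is the
indicator that `j` is pivotal at `x`. Resampling coordinate `j` changes `f` exactly when `j` is
pivotal and the new bit differs from the old one, which happens with probability `2p(1 - p)`.
-/

open Finset Function

-- The mass function of `bern q` only for `0 ≤ q ≤ 1`: `bern` truncates masses at `0`.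
noncomputable def bernMass (q : ℝ) (b : Bool) : ℝ := if b then q else 1 - q

lemma hasDerivAt_bernMass (b : Bool) (p : ℝ) :
    HasDerivAt (fun q => bernMass q b) (if b then 1 else -1) p := by
  cases b
  · simpa [bernMass] using (hasDerivAt_id p).const_sub 1
  · simpa [bernMass] using hasDerivAt_id' p

instance isFiniteMeasure_bern (q : ℝ) : IsFiniteMeasure (bern q) := by
  constructor
  simp [bern]

lemma bern_singleton (q : ℝ) (b : Bool) : bern q {b} = ENNReal.ofReal (bernMass q b) := by
  cases b <;> simp [bern, bernMass]

lemma bernMass_nonneg {q : ℝ} (h0 : 0 ≤ q) (h1 : q ≤ 1) (b : Bool) : 0 ≤ bernMass q b := by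
  cases b <;> simp [bernMass] <;> linarith

lemma bern_real_singleton {q : ℝ} (h0 : 0 ≤ q) (h1 : q ≤ 1) (b : Bool) :
    (bern q).real {b} = bernMass q b := by
  rw [measureReal_def, bern_singleton, ENNReal.toReal_ofReal (bernMass_nonneg h0 h1 b)]

section

variable {ι : Type*} [Fintype ι]

lemma pi_bern_real_singleton {q : ℝ} (h0 : 0 ≤ q) (h1 : q ≤ 1) (x : ι → Bool) :
    (Measure.pi fun _ : ι => bern q).real {x} = ∏ i, bernMass q (x i) := by
  rw [measureReal_def, ← Set.univ_pi_singleton x, Measure.pi_pi, ENNReal.toReal_prod]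
  exact prod_congr rfl fun i _ => by rw [← measureReal_def, bern_real_singleton h0 h1]

lemma integral_pi_bern [DecidableEq ι] {q : ℝ} (h0 : 0 ≤ q) (h1 : q ≤ 1)
    (F : (ι → Bool) → ℝ) :
    ∫ x, F x ∂(Measure.pi fun _ : ι => bern q) = ∑ x, (∏ i, bernMass q (x i)) * F x := by
  rw [integral_fintype .of_finite]
  simp only [pi_bern_real_singleton h0 h1, smul_eq_mul]

variable [DecidableEq ι]

lemma hasDerivAt_sum_prod_bernMass_mul (F : (ι → Bool) → ℝ) (p : ℝ) :
    HasDerivAt (fun q => ∑ x, (∏ i, bernMass q (x i)) * F x)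
      (∑ j, ∑ x, (∏ i ∈ univ.erase j, bernMass p (x i)) * (if x j then 1 else -1) * F x)
      p := by
  have h := HasDerivAt.fun_sum (u := univ) fun x _ =>
    (HasDerivAt.fun_finsetProd (u := univ) fun i _ => hasDerivAt_bernMass (x i) p).mul_const (F x)
  refine h.congr_deriv ?_
  rw [sum_comm]
  simp only [sum_mul, smul_eq_mul]

lemma sum_sum_update_bool {M : Type*} [AddCommMonoid M] (j : ι) (H : (ι → Bool) → M) :
    ∑ x, ∑ b, H (update x j b) = 2 • ∑ x, H x := by
  set σ : (ι → Bool) → (ι → Bool) := fun x => update x j (!x j)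
  have hσ : Involutive σ := fun x => by simp [σ]
  have hpair : ∀ x, ∑ b, H (update x j b) = H x + H (σ x) := fun x => by
    have hx : update x j (x j) = x := update_eq_self j x
    rw [Fintype.sum_bool]
    cases h : x j <;> simp only [σ, h] at hx ⊢ <;> simp [hx, add_comm]
  simp only [hpair, sum_add_distrib, two_nsmul]
  rw [Fintype.sum_bijective σ hσ.bijective (fun x => H (σ x)) H (fun _ => rfl)]

lemma prod_erase_bernMass_update (p : ℝ) (j : ι) (x : ι → Bool) (b : Bool) :
    ∏ i ∈ univ.erase j, bernMass p (update x j b i) =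
      ∏ i ∈ univ.erase j, bernMass p (x i) :=
  prod_congr rfl fun i hi => by rw [update_of_ne (ne_of_mem_erase hi)]

lemma sum_sum_bernMass_mul_ne_update (p : ℝ) (f : (ι → Bool) → Bool) (j : ι) :
    ∑ x, ∑ b, (∏ i, bernMass p (x i)) * bernMass p b *
        (if f x ≠ f (update x j b) then 1 else 0) =
      p * (1 - p) * ∑ x, (∏ i ∈ univ.erase j, bernMass p (x i)) *
        (if f (update x j false) ≠ f (update x j true) then 1 else 0) := by
  rw [← mul_right_inj' (two_ne_zero (α := ℝ)), two_mul, ← two_nsmul,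
    ← sum_sum_update_bool j, mul_sum, mul_sum]
  refine sum_congr rfl fun x _ => ?_
  simp only [Fintype.sum_bool, ← mul_prod_erase univ _ (mem_univ j), update_self, update_idem,
    prod_erase_bernMass_update]
  cases f (update x j false) <;> cases f (update x j true) <;> simp [bernMass] <;> ring

lemma two_mul_sum_prod_erase_bernMass_mul (p : ℝ) (F : (ι → Bool) → ℝ) (j : ι) :
    2 * ∑ x, (∏ i ∈ univ.erase j, bernMass p (x i)) * (if x j then 1 else -1) * F x =
      ∑ x, (∏ i ∈ univ.erase j, bernMass p (x i)) *
        (F (update x j true) - F (update x j false)) := by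
  rw [two_mul, ← two_nsmul, ← sum_sum_update_bool j]
  refine sum_congr rfl fun x _ => ?_
  simp only [Fintype.sum_bool, prod_erase_bernMass_update, update_self, ↓reduceIte,
    Bool.false_eq_true]
  ring

end

lemma influence_bern_eq_sum {n : ℕ} {p : ℝ} (h0 : 0 ≤ p) (h1 : p ≤ 1)
    (f : (Fin n → Bool) → Bool) (j : Fin n) :
    influence (bern p) n f j = ∑ x, ∑ b, (∏ i, bernMass p (x i)) * bernMass p b *
      (if f x ≠ f (update x j b) then 1 else 0) := by
  rw [influence, ← measureReal_def, ← integral_indicator_one (.of_discrete),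
    integral_fintype .of_finite, Fintype.sum_prod_type]
  refine sum_congr rfl fun x _ => sum_congr rfl fun b _ => ?_
  rw [← Set.singleton_prod_singleton, measureReal_prod_prod, pi_bern_real_singleton h0 h1,
    bern_real_singleton h0 h1, smul_eq_mul, Set.indicator_apply]
  rfl

lemma influence_bern_eq_of_monotone {n : ℕ} {f : (Fin n → Bool) → Bool} (hf : Monotone f)
    {p : ℝ} (h0 : 0 ≤ p) (h1 : p ≤ 1) (j : Fin n) :
    influence (bern p) n f j = 2 * p * (1 - p) * ∑ x, (∏ i ∈ univ.erase j, bernMass p (x i)) *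
      (if x j then 1 else -1) * (if f x then 1 else 0) := by
  have hpivotal : ∀ x, ((if f (update x j true) then 1 else 0) -
      (if f (update x j false) then 1 else 0) : ℝ) =
        if f (update x j false) ≠ f (update x j true) then 1 else 0 := fun x => by
    have hle := hf (update_le_update_iff'.2 (Bool.false_le true) : update x j false ≤ _)
    revert hle
    cases f (update x j false) <;> cases f (update x j true) <;> simp
  rw [influence_bern_eq_sum h0 h1, sum_sum_bernMass_mul_ne_update,
    mul_comm 2 p, mul_right_comm p 2, mul_assoc (p * (1 - p)) 2,
    two_mul_sum_prod_erase_bernMass_mul]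
  simp only [hpivotal]

theorem margulis_russo_general (n : ℕ) (f : (Fin n → Bool) → Bool)
    (hmono : ∀ x y : Fin n → Bool, (∀ i, x i ≤ y i) → f x ≤ f y)
    (p : ℝ) (hp : 0 < p) (hp1 : p < 1) :
    ∃ D : ℝ,
      HasDerivAt (fun q : ℝ =>
          ∫ x, (if f x then (1 : ℝ) else 0) ∂(Measure.pi fun _ : Fin n => bern q)) D p ∧
      2 * p * (1 - p) * D = totalInfluence (bern p) n f := by
  have hderiv := (hasDerivAt_sum_prod_bernMass_mul (fun x => if f x then (1 : ℝ) else 0) p)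
    |>.congr_of_eventuallyEq <| Filter.eventually_of_mem (Ioo_mem_nhds hp hp1)
      fun q hq => integral_pi_bern hq.1.le hq.2.le _
  refine ⟨_, hderiv, ?_⟩
  rw [totalInfluence, mul_sum]
  exact sum_congr rfl fun j _ =>
    (influence_bern_eq_of_monotone (fun x y h => hmono x y h) hp.le hp1.le j).symm

/-- **Margulis–Russo formula.** For an increasing `f : {0,1}ⁿ → {0,1}` and `p ∈ (0,1)`, the
map `q ↦ μ_q(f) = ∫ f dμ_qⁿ` is differentiable at `p`, and its derivative `D` there satisfies
`2p(1-p)·D = I_f`, where `I_f` is computed with respect to `μ_pⁿ`. -/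
theorem margulis_russo (n : ℕ) (hn : 0 < n) (f : (Fin n → Bool) → Bool)
    (hmono : ∀ x y : Fin n → Bool, (∀ i, x i ≤ y i) → f x ≤ f y)
    (p : ℝ) (hp : 0 < p) (hp1 : p < 1) :
    ∃ D : ℝ,
      HasDerivAt (fun q : ℝ =>
          ∫ x, (if f x then (1 : ℝ) else 0) ∂(Measure.pi fun _ : Fin n => bern q)) D p ∧
      2 * p * (1 - p) * D = totalInfluence (bern p) n f :=
  margulis_russo_general n f hmono p hp hp1
end

section
/- Let n be a positive integer, 0 < p < 1, and let f : {0,1}^n → {0,1} be defined by f(x) = 1 if and only if x ≠ (0,…,0). Let A ⊆ [n], and let g : {0,1}^n → {0,1} be any function that depends only on the coordinates in A. Then ‖f − g‖_1 ≥ (1−p)^{|A|} · min( (1−p)^{n−|A|}, 1 − (1−p)^{n−|A|} ), where the L¹ norm is with respect to the p-biased measure μ_p^n. Moreover E[f(x) | x_A = (0,…,0)] = 1 − (1−p)^{n−|A|}. -/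
/-! On the cylinder `E = {x | x_A = 0}` a function `g` depending only on the coordinates in `A`
is constant, so `‖f - g‖₁` is at least the mass of the part of `E` where `f` differs from that
constant: either the point `0`, of mass `(1-p)^n`, or `E \ {0}`, of mass `(1-p)^|A| - (1-p)^n`.
The second mass, divided by the mass `(1-p)^|A|` of `E`, is the conditional expectation. -/

open MeasureTheory

open Finset

lemma bern_singleton_false (p : ℝ) : bern p {false} = ENNReal.ofReal (1 - p) := by
  simp [bern]

lemma isProbabilityMeasure_bern {p : ℝ} (hp : 0 ≤ p) (hp1 : p ≤ 1) :
    IsProbabilityMeasure (bern p) :=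
  ⟨by simp [bern, ← ENNReal.ofReal_add hp (sub_nonneg.2 hp1)]⟩

section BernoulliCube

variable {ι : Type*} [Fintype ι] {p : ℝ} (S : Finset ι)

lemma measureReal_pi_bern_forall_eq_false (hp : 0 ≤ p) (hp1 : p ≤ 1) :
    (Measure.pi fun _ : ι => bern p).real {x | ∀ i ∈ S, x i = false} = (1 - p) ^ #S := by
  have := isProbabilityMeasure_bern hp hp1
  change (Measure.pi fun _ : ι => bern p).real ((S : Set ι).pi fun _ => {false}) = _
  rw [measureReal_def, Measure.pi_pi_finset, prod_const, bern_singleton_false,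
    ENNReal.toReal_pow, ENNReal.toReal_ofReal (sub_nonneg.2 hp1)]

lemma measureReal_pi_bern_forall_eq_false_inter_eq_false (hp : 0 ≤ p) (hp1 : p ≤ 1)
    {F : (ι → Bool) → Bool} (hF : ∀ x, F x = true ↔ ∃ i, x i = true) :
    (Measure.pi fun _ : ι => bern p).real ({x | ∀ i ∈ S, x i = false} ∩ {x | F x = false}) =
      (1 - p) ^ Fintype.card ι := by
  have hzero : {x : ι → Bool | ∀ i ∈ S, x i = false} ∩ {x | F x = false} =
      {x | ∀ i ∈ univ, x i = false} := by
    ext x; simpa [← Bool.not_eq_true, hF] using fun h i _ => h i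
  rw [hzero, measureReal_pi_bern_forall_eq_false _ hp hp1, card_univ]

lemma measureReal_pi_bern_forall_eq_false_inter_eq_true (hp : 0 ≤ p) (hp1 : p ≤ 1)
    {F : (ι → Bool) → Bool} (hF : ∀ x, F x = true ↔ ∃ i, x i = true) :
    (Measure.pi fun _ : ι => bern p).real ({x | ∀ i ∈ S, x i = false} ∩ {x | F x = true}) =
      (1 - p) ^ #S - (1 - p) ^ Fintype.card ι := by
  have := isProbabilityMeasure_bern hp hp1
  have hnonzero : {x : ι → Bool | ∀ i ∈ S, x i = false} ∩ {x | F x = true} =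
      {x | ∀ i ∈ S, x i = false} \ {x | ∀ i ∈ univ, x i = false} := by
    ext x; simp [hF]
  have hsub : {x : ι → Bool | ∀ i ∈ univ, x i = false} ⊆ {x | ∀ i ∈ S, x i = false} :=
    fun x hx i _ => hx i (mem_univ i)
  rw [hnonzero, measureReal_sdiff hsub (Set.toFinite _).measurableSet,
    measureReal_pi_bern_forall_eq_false _ hp hp1, measureReal_pi_bern_forall_eq_false _ hp hp1,
    card_univ]

end BernoulliCube

section BoolValued

variable {α : Type*} [MeasurableSpace α] (μ : Measure α)

lemma integral_ite_one_zero {F : α → Bool} (hF : MeasurableSet {x | F x}) :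
    ∫ x, (if F x then (1 : ℝ) else 0) ∂μ = μ.real {x | F x} := by
  rw [← integral_indicator_one hF]
  congr with x
  simp [Set.indicator_apply]

lemma integral_abs_ite_sub_ite {f g : α → Bool} (hfg : MeasurableSet {x | f x ≠ g x}) :
    ∫ x, |(if f x then (1 : ℝ) else 0) - (if g x then (1 : ℝ) else 0)| ∂μ =
      μ.real {x | f x ≠ g x} := by
  have hbne (a b : Bool) :
      |(if a then (1 : ℝ) else 0) - (if b then (1 : ℝ) else 0)| = if a != b then 1 else 0 := by
    cases a <;> cases b <;> norm_num
  simp only [hbne]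
  rw [integral_ite_one_zero μ (by simpa using hfg)]
  simp

lemma min_measureReal_le_measureReal_ne [IsFiniteMeasure μ] {f g : α → Bool} {E : Set α}
    {c : Bool} (hg : ∀ x ∈ E, g x = c) :
    min (μ.real (E ∩ {x | f x = false})) (μ.real (E ∩ {x | f x = true})) ≤
      μ.real {x | f x ≠ g x} := by
  cases c
  · exact (min_le_right _ _).trans (measureReal_mono fun x ⟨hx, hf⟩ => by simp_all)
  · exact (min_le_left _ _).trans (measureReal_mono fun x ⟨hx, hf⟩ => by simp_all)

end BoolValued

theorem nonzero_indicator_far_from_junta_general (n : ℕ) (p : ℝ) (hp : 0 < p)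
    (hp1 : p < 1) (A : Finset (Fin n)) (g : (Fin n → Bool) → Bool)
    (hg : ∀ x y : Fin n → Bool, (∀ i ∈ A, x i = y i) → g x = g y) :
    (∫ x, |(if (decide (∃ i, x i = true) : Bool) then (1 : ℝ) else 0)
          - (if g x then (1 : ℝ) else 0)| ∂(Measure.pi fun _ : Fin n => bern p) ≥
      (1 - p) ^ A.card *
        min ((1 - p) ^ (n - A.card)) (1 - (1 - p) ^ (n - A.card))) ∧
    (∫ x in {x : Fin n → Bool | ∀ i ∈ A, x i = false},
        (if (decide (∃ i, x i = true) : Bool) then (1 : ℝ) else 0)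
        ∂(Measure.pi fun _ : Fin n => bern p)) /
      ((Measure.pi fun _ : Fin n => bern p)
        {x : Fin n → Bool | ∀ i ∈ A, x i = false}).toReal =
      1 - (1 - p) ^ (n - A.card) := by
  have := isProbabilityMeasure_bern hp.le hp1.le
  have hmeas (s : Set (Fin n → Bool)) : MeasurableSet s := s.toFinite.measurableSet
  have hF (x : Fin n → Bool) : decide (∃ i, x i = true) = true ↔ ∃ i, x i = true :=
    decide_eq_true_iff
  have hzero := measureReal_pi_bern_forall_eq_false_inter_eq_false A hp.le hp1.le hF
  have hnonzero := measureReal_pi_bern_forall_eq_false_inter_eq_true A hp.le hp1.le hF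
  have hpow : (1 - p) ^ n = (1 - p) ^ #A * (1 - p) ^ (n - #A) := by
    rw [← pow_add, Nat.add_sub_cancel' (by simpa using card_le_univ A)]
  rw [Fintype.card_fin, hpow] at hzero hnonzero
  refine ⟨?_, ?_⟩
  · rw [ge_iff_le, integral_abs_ite_sub_ite _ (hmeas _), mul_min_of_nonneg _ _ (by positivity),
      mul_one_sub, ← hnonzero, ← hzero]
    apply min_measureReal_le_measureReal_ne
    exact fun x hx => hg x _ fun i hi => hx i hi
  · rw [integral_ite_one_zero _ (hmeas _), measureReal_restrict_apply (hmeas _), Set.inter_comm,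
      hnonzero, ← measureReal_def, measureReal_pi_bern_forall_eq_false A hp.le hp1.le,
      ← mul_one_sub, mul_div_cancel_left₀ _ (pow_ne_zero _ (sub_ne_zero.2 hp1.ne'))]

/-- For `f(x) = 1 ↔ x ≠ (0,…,0)` on `({0,1}ⁿ, μ_pⁿ)` and any `g` depending only on the
coordinates in `A`: `‖f - g‖₁ ≥ (1-p)^{|A|} · min((1-p)^{n-|A|}, 1-(1-p)^{n-|A|})`, and
`E[f(x) | x_A = (0,…,0)] = 1 - (1-p)^{n-|A|}`. -/
theorem nonzero_indicator_far_from_junta (n : ℕ) (hn : 0 < n) (p : ℝ) (hp : 0 < p)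
    (hp1 : p < 1) (A : Finset (Fin n)) (g : (Fin n → Bool) → Bool)
    (hg : ∀ x y : Fin n → Bool, (∀ i ∈ A, x i = y i) → g x = g y) :
    (∫ x, |(if (decide (∃ i, x i = true) : Bool) then (1 : ℝ) else 0)
          - (if g x then (1 : ℝ) else 0)| ∂(Measure.pi fun _ : Fin n => bern p) ≥
      (1 - p) ^ A.card *
        min ((1 - p) ^ (n - A.card)) (1 - (1 - p) ^ (n - A.card))) ∧
    (∫ x in {x : Fin n → Bool | ∀ i ∈ A, x i = false},
        (if (decide (∃ i, x i = true) : Bool) then (1 : ℝ) else 0)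
        ∂(Measure.pi fun _ : Fin n => bern p)) /
      ((Measure.pi fun _ : Fin n => bern p)
        {x : Fin n → Bool | ∀ i ∈ A, x i = false}).toReal =
      1 - (1 - p) ^ (n - A.card) :=
  nonzero_indicator_far_from_junta_general n p hp hp1 A g hg
end

section
/- Let (Ω, 𝔉, μ) be a probability space, 𝒢 ⊆ 𝔉 a sub-σ-algebra, and f : Ω → {0,1} an 𝔉-measurable function. Define h : Ω → {0,1} by h = 1 on the set where E[f | 𝒢] > 1/2 and h = 0 where E[f | 𝒢] ≤ 1/2. Then h is 𝒢-measurable and ‖f − h‖_1 ≤ 4 ‖f − E[f | 𝒢]‖_2². -/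
open MeasureTheory

/-- Rounding the conditional expectation: for `𝒢 ⊆ 𝔉` and Boolean `f`, the function `h` that
is `1` where `E[f | 𝒢] > 1/2` and `0` where `E[f | 𝒢] ≤ 1/2` is `𝒢`-measurable and satisfies
`‖f - h‖₁ ≤ 4 ‖f - E[f | 𝒢]‖₂²`. -/
theorem round_condexp {Ω : Type*} (m : MeasurableSpace Ω) [m0 : MeasurableSpace Ω] (μ : Measure Ω)
    [IsProbabilityMeasure μ] (hm : m ≤ m0)
    (f : Ω → Bool) (hf : Measurable f) :
    Measurable[m] (fun ω => if 1 / 2 < (μ[fun ω' => if f ω' then (1 : ℝ) else 0|m]) ω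
        then true else false) ∧
    ∫ ω, |(if f ω then (1 : ℝ) else 0) -
        (if (if 1 / 2 < (μ[fun ω' => if f ω' then (1 : ℝ) else 0|m]) ω then true else false)
          then (1 : ℝ) else 0)| ∂μ ≤
      4 * ∫ ω, ((if f ω then (1 : ℝ) else 0)
          - (μ[fun ω' => if f ω' then (1 : ℝ) else 0|m]) ω) ^ 2 ∂μ := by
  set F : Ω → ℝ := fun ω => if f ω then (1 : ℝ) else 0 with hFdef
  set g : Ω → ℝ := μ[F|m] with hgdef
  have hFmeasm : Measurable[m0] F :=
    Measurable.ite (hf (measurableSet_singleton true)) measurable_const measurable_const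
  have hFmeas : Measurable[m0] F := hFmeasm
  have hgm : StronglyMeasurable[m] g := stronglyMeasurable_condExp
  have hset : MeasurableSet[m] {ω | 1 / 2 < g ω} :=
    measurableSet_lt measurable_const hgm.measurable
  constructor
  · exact Measurable.ite hset measurable_const measurable_const
  · have hFae : AEStronglyMeasurable[m0] F μ := Measurable.aestronglyMeasurable (μ := μ) hFmeas
    have hFint : Integrable F μ := by
      refine Integrable.mono' (integrable_const (1 : ℝ)) hFae ?_
      filter_upwards with ω
      by_cases h : f ω <;> simp [hFdef, h]
    have hg_le : g ≤ᵐ[μ] fun _ => (1 : ℝ) := by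
      have h1 : μ[F|m] ≤ᵐ[μ] μ[(fun _ => (1 : ℝ))|m] := by
        refine condExp_mono hFint (integrable_const 1) ?_
        filter_upwards with ω
        by_cases h : f ω <;> simp [hFdef, h]
      refine h1.trans ?_
      rw [condExp_const hm]
    have hg_nonneg : 0 ≤ᵐ[μ] g := by
      refine condExp_nonneg ?_
      filter_upwards with ω
      by_cases h : f ω <;> simp [hFdef, h]
    have hgae : AEStronglyMeasurable[m0] g μ :=
      (hgm.mono hm).aestronglyMeasurable
    have hsq : Integrable (fun ω => (F ω - g ω) ^ 2) μ := by
      refine Integrable.mono' (integrable_const (1 : ℝ)) ?_ ?_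
      · exact ((hFae.sub hgae).pow 2)
      · filter_upwards [hg_le, hg_nonneg] with ω h1 h0
        simp only [Pi.zero_apply] at h0
        rw [Real.norm_eq_abs, abs_of_nonneg (sq_nonneg _)]
        by_cases h : f ω <;>
          simp only [hFdef, h, if_true, Bool.false_eq_true, if_false, ite_true, ite_false] <;>
          nlinarith
    have hrhs : Integrable (fun ω => 4 * (F ω - g ω) ^ 2) μ := hsq.const_mul 4
    rw [← integral_const_mul]
    refine integral_mono_of_nonneg ?_ hrhs ?_
    · filter_upwards with ω; positivity
    · filter_upwards with ω
      by_cases hfω : f ω <;> by_cases hgω : 1 / 2 < g ω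
      · simp only [hFdef, hfω, hgω, if_true, ite_true]
        simp only [sub_self, abs_zero]
        positivity
      · have hg2 : g ω ≤ 1 / 2 := not_lt.mp hgω
        simp only [hFdef, hfω, hgω, if_true, if_false, ite_true, ite_false,
          Bool.false_eq_true, sub_zero, abs_one]
        nlinarith
      · have := hgω
        simp only [hFdef, hfω, hgω, if_true, if_false, ite_true, ite_false,
          Bool.false_eq_true, zero_sub, abs_neg, abs_one]
        nlinarith
      · simp only [hFdef, hfω, hgω, if_false, ite_false, Bool.false_eq_true,
          sub_self, abs_zero]
        positivity
end
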